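/- arXiv:math/0003175 — 2 statements merged into one kernel-verified Lean document; each statement's English description precedes it below -/
import Mathlib

section
/- Let f be a non-vanishing analytic function on a domain U ⊂ ℂ. For z ∈ U and any second-order partial derivative (∂²/∂x^j ∂y^k with j + k = 2, j, k ≥ 0), one has |∂²|f|/∂x^j∂y^k| ≤ |f''(z)| + 2|f'(z)|²/|f(z)|. -/
/-! Along a real curve `γ` with velocity `v`, `|f ∘ γ|` has derivative `⟪f, f' v⟫ / |f|` for the
real inner product `⟪a, b⟫ = Re (conj a * b)` on `ℂ`. Differentiating once more along a curve with
velocity `e`, the quotient rule and Cauchy–Schwarz bound the result by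
`|v| |e| (|f''| + 2 |f'|² / |f|)`; the coordinate partials are the cases `v, e ∈ {1, i}`. -/

open Complex
open scoped RealInnerProductSpace

section InnerProductSpace

variable {F : Type*} [NormedAddCommGroup F] [InnerProductSpace ℝ F]

theorem HasDerivAt.norm_of_ne_zero {g : ℝ → F} {g' : F} {t : ℝ} (hg : HasDerivAt g g' t)
    (h0 : g t ≠ 0) : HasDerivAt (fun s => ‖g s‖) (⟪g t, g'⟫ / ‖g t‖) t := by
  have hsq : ‖g t‖ ^ 2 ≠ 0 := by positivity
  convert hg.norm_sq.sqrt hsq using 1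
  · simp only [Real.sqrt_sq (norm_nonneg _)]
  · rw [Real.sqrt_sq (norm_nonneg _)]; ring

theorem HasDerivAt.inner_div_norm {g h : ℝ → F} {g' h' : F} {t : ℝ} (hg : HasDerivAt g g' t)
    (hh : HasDerivAt h h' t) (h0 : g t ≠ 0) :
    HasDerivAt (fun s => ⟪g s, h s⟫ / ‖g s‖)
      ((⟪g t, h'⟫ + ⟪g', h t⟫) / ‖g t‖ - ⟪g t, h t⟫ * ⟪g t, g'⟫ / ‖g t‖ ^ 3) t := by
  have hr : ‖g t‖ ≠ 0 := norm_ne_zero_iff.mpr h0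
  refine ((hg.inner ℝ hh).fun_div (hg.norm_of_ne_zero h0) hr).congr_deriv ?_
  field_simp

theorem abs_inner_div_norm_deriv_le (a b a' b' : F) :
    |(⟪a, b'⟫ + ⟪a', b⟫) / ‖a‖ - ⟪a, b⟫ * ⟪a, a'⟫ / ‖a‖ ^ 3| ≤ ‖b'‖ + 2 * ‖a'‖ * ‖b‖ / ‖a‖ := by
  rcases eq_or_ne a 0 with rfl | ha
  · simp
  have hr : 0 < ‖a‖ := norm_pos_iff.mpr ha
  have h1 : |⟪a, b'⟫ + ⟪a', b⟫| ≤ ‖a‖ * ‖b'‖ + ‖a'‖ * ‖b‖ :=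
    (abs_add_le _ _).trans (add_le_add (abs_real_inner_le_norm _ _) (abs_real_inner_le_norm _ _))
  have h2 : |⟪a, b⟫ * ⟪a, a'⟫| ≤ (‖a‖ * ‖b‖) * (‖a‖ * ‖a'‖) := by
    rw [abs_mul]
    exact mul_le_mul (abs_real_inner_le_norm _ _) (abs_real_inner_le_norm _ _) (abs_nonneg _)
      (by positivity)
  calc _ ≤ |(⟪a, b'⟫ + ⟪a', b⟫) / ‖a‖| + |⟪a, b⟫ * ⟪a, a'⟫ / ‖a‖ ^ 3| := abs_sub _ _
    _ ≤ (‖a‖ * ‖b'‖ + ‖a'‖ * ‖b‖) / ‖a‖ + (‖a‖ * ‖b‖) * (‖a‖ * ‖a'‖) / ‖a‖ ^ 3 := by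
      rw [abs_div, abs_div, abs_of_pos hr, abs_of_pos (pow_pos hr 3)]
      gcongr
    _ = ‖b'‖ + 2 * ‖a'‖ * ‖b‖ / ‖a‖ := by field_simp; ring

end InnerProductSpace

noncomputable def normDirDeriv (f f' : ℂ → ℂ) (v w : ℂ) : ℝ :=
  ⟪f w, f' w * v⟫ / ‖f w‖

section

variable {f f' f'' : ℂ → ℂ} {γ : ℝ → ℂ} {v w : ℂ} {t : ℝ}

theorem hasDerivAt_norm_comp (hf : HasDerivAt f (f' w) w) (hγ : HasDerivAt γ v t)
    (hw : γ t = w) (h0 : f w ≠ 0) :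
    HasDerivAt (fun s => ‖f (γ s)‖) (normDirDeriv f f' v w) t := by
  subst hw
  exact (hf.comp t hγ).norm_of_ne_zero h0

theorem abs_le_of_hasDerivAt_normDirDeriv {d : ℂ} {p : ℝ} (hf : HasDerivAt f (f' w) w)
    (hf' : HasDerivAt f' (f'' w) w) (hγ : HasDerivAt γ v t) (hw : γ t = w) (h0 : f w ≠ 0)
    (hp : HasDerivAt (fun s => normDirDeriv f f' d (γ s)) p t) :
    |p| ≤ ‖d‖ * ‖v‖ * (‖f'' w‖ + 2 * ‖f' w‖ ^ 2 / ‖f w‖) := by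
  subst hw
  have hd := (hf.comp t hγ).inner_div_norm ((hf'.comp t hγ).mul_const d) h0
  rw [hp.unique hd]
  refine (abs_inner_div_norm_deriv_le _ _ _ _).trans_eq ?_
  simp only [Function.comp_apply, norm_mul]
  ring

end

theorem HasDerivAt.comp_congr_of_eqOn {X F : Type*} [TopologicalSpace X] [NormedAddCommGroup F]
    [NormedSpace ℝ F] {φ ψ : X → F} {U : Set X} (hU : IsOpen U) (hφψ : Set.EqOn φ ψ U)
    {γ : ℝ → X} {t : ℝ} {p : F} (hp : HasDerivAt (fun s => φ (γ s)) p t)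
    (hγ : ContinuousAt γ t) (ht : γ t ∈ U) : HasDerivAt (fun s => ψ (γ s)) p t :=
  hp.congr_of_eventuallyEq <| (hγ.eventually_mem (hU.mem_nhds ht)).mono fun _ hs => (hφψ hs).symm

theorem hasDerivAt_ofReal_add_mul_I_left (x y : ℝ) :
    HasDerivAt (fun x' : ℝ => (x' : ℂ) + y * I) 1 x :=
  (hasDerivAt_id x).ofReal_comp.add_const _

theorem hasDerivAt_ofReal_add_mul_I_right (x y : ℝ) :
    HasDerivAt (fun y' : ℝ => (x : ℂ) + y' * I) I y := by
  simpa using ((hasDerivAt_id y).ofReal_comp.mul_const I).const_add (x : ℂ)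

/-- For a non-vanishing analytic function `f` on an open set `U ⊂ ℂ`
and `z = x + iy ∈ U`, every second-order partial derivative of `|f|` (i.e.
`∂²/∂x^j∂y^k` with `j + k = 2`) is bounded in absolute value by
`|f''(z)| + 2|f'(z)|²/|f(z)|`.  Here `Dx, Dy : ℂ → ℝ` denote the first-order partial
derivatives of `|f|` on `U`, and `pxx, pxy, pyx, pyy` the second-order partials at `z`. -/
theorem stmt4 (U : Set ℂ) (hU : IsOpen U) (f f' f'' : ℂ → ℂ)
    (hf : ∀ w ∈ U, HasDerivAt f (f' w) w) (hf' : ∀ w ∈ U, HasDerivAt f' (f'' w) w)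
    (hf0 : ∀ w ∈ U, f w ≠ 0)
    (Dx Dy : ℂ → ℝ)
    (hDx : ∀ w ∈ U, HasDerivAt (fun x' : ℝ => ‖f ((x' : ℂ) + w.im * I)‖) (Dx w) w.re)
    (hDy : ∀ w ∈ U, HasDerivAt (fun y' : ℝ => ‖f ((w.re : ℂ) + y' * I)‖) (Dy w) w.im)
    (x y : ℝ) (hz : (x : ℂ) + y * I ∈ U) (pxx pxy pyx pyy : ℝ)
    (hpxx : HasDerivAt (fun x' : ℝ => Dx ((x' : ℂ) + y * I)) pxx x)
    (hpxy : HasDerivAt (fun y' : ℝ => Dx ((x : ℂ) + y' * I)) pxy y)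
    (hpyx : HasDerivAt (fun x' : ℝ => Dy ((x' : ℂ) + y * I)) pyx x)
    (hpyy : HasDerivAt (fun y' : ℝ => Dy ((x : ℂ) + y' * I)) pyy y) :
    ∀ p ∈ ({pxx, pxy, pyx, pyy} : Set ℝ),
      |p| ≤ ‖f'' ((x : ℂ) + y * I)‖ +
        2 * ‖f' ((x : ℂ) + y * I)‖ ^ 2 / ‖f ((x : ℂ) + y * I)‖ := by
  have hDx' : Set.EqOn Dx (normDirDeriv f f' 1) U := fun w hw =>
    (hDx w hw).unique <| hasDerivAt_norm_comp (hf w hw)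
      (hasDerivAt_ofReal_add_mul_I_left w.re w.im) (re_add_im w) (hf0 w hw)
  have hDy' : Set.EqOn Dy (normDirDeriv f f' I) U := fun w hw =>
    (hDy w hw).unique <| hasDerivAt_norm_comp (hf w hw)
      (hasDerivAt_ofReal_add_mul_I_right w.re w.im) (re_add_im w) (hf0 w hw)
  have hbound : ∀ {d v : ℂ} {γ : ℝ → ℂ} {t p : ℝ}, ‖d‖ = 1 → ‖v‖ = 1 → HasDerivAt γ v t →
      γ t = x + y * I → HasDerivAt (fun s => normDirDeriv f f' d (γ s)) p t →
      |p| ≤ ‖f'' (x + y * I)‖ + 2 * ‖f' (x + y * I)‖ ^ 2 / ‖f (x + y * I)‖ := by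
    intro d v γ t p hd hv hγ hγt hp
    simpa [hd, hv] using
      abs_le_of_hasDerivAt_normDirDeriv (hf _ hz) (hf' _ hz) hγ hγt (hf0 _ hz) hp
  have hx := hasDerivAt_ofReal_add_mul_I_left x y
  have hy := hasDerivAt_ofReal_add_mul_I_right x y
  rintro p (rfl | rfl | rfl | rfl)
  · exact hbound norm_one norm_one hx rfl (hpxx.comp_congr_of_eqOn hU hDx' hx.continuousAt hz)
  · exact hbound norm_one norm_I hy rfl (hpxy.comp_congr_of_eqOn hU hDx' hy.continuousAt hz)
  · exact hbound norm_I norm_one hx rfl (hpyx.comp_congr_of_eqOn hU hDy' hx.continuousAt hz)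
  · exact hbound norm_I norm_I hy rfl (hpyy.comp_congr_of_eqOn hU hDy' hy.continuousAt hz)
end

section
/- Let T(k) := K(√(1−k²))/K(k) for 0 < k < 1, where K is the complete elliptic integral of the first kind. Then for 0 < a < 1, T(sin(πa/2)) ≤ (2/π) log(4/sin(πa/2)) ≤ (2/π) log(4/a). -/
/-!
In `T(k) = K(k')/K(k)` with `k' = √(1 - k²)`, the denominator is bounded termwise:
`(1 - k²x²)^(-1/2) ≥ 1 + k²x²/2` integrates to `K(k) ≥ (π/2)(1 + k²/4)`. For the numerator put
`s² = 1 - k²/2` and `w(x)² = s² + (k²/4)(1 + x)/(1 - x)`. Then `(1 - x²) w² ≤ 1 - k'²x²`, so the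
integrand of `K(k')` is dominated by `1/((1 - x²) w)`, whose primitive
`(2s)⁻¹ log ((w - s)/(w + s))` is explicit and negative on `(-1, 1)`. This gives
`K(k') ≤ s⁻¹ log (2 (√(1 - k²/4) + s)/k)`, and elementary estimates bound the right-hand side by
`(1 + k²/4) log (4/k)`. The second inequality is `sin (πa/2) ≥ a`.
-/

open Real

/-- The complete elliptic integral of the first kind,
`K(k) = ∫₀¹ (1-x²)^{-1/2} (1-k²x²)^{-1/2} dx`. -/
noncomputable def ellipticK (k : ℝ) : ℝ :=
  ∫ x in (0:ℝ)..1, (Real.sqrt (1 - x ^ 2))⁻¹ * (Real.sqrt (1 - k ^ 2 * x ^ 2))⁻¹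

/-- The module function `T(k) = K(√(1-k²)) / K(k)`. -/
noncomputable def moduleT (k : ℝ) : ℝ :=
  ellipticK (Real.sqrt (1 - k ^ 2)) / ellipticK k

open MeasureTheory intervalIntegral Filter Set Topology

noncomputable def ellipticKIntegrand (k x : ℝ) : ℝ :=
  (√(1 - x ^ 2))⁻¹ * (√(1 - k ^ 2 * x ^ 2))⁻¹

lemma ellipticK_eq_integral (k : ℝ) : ellipticK k = ∫ x in (0:ℝ)..1, ellipticKIntegrand k x :=
  rfl

lemma intervalIntegrable_inv_sqrt_one_sub_sq :
    IntervalIntegrable (fun x => (√(1 - x ^ 2))⁻¹) volume 0 1 := by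
  refine (Polynomial.Chebyshev.intervalIntegrable_sqrt_one_sub_sq_inv.mono_set ?_).congr ?_
  · rw [uIcc_of_le zero_le_one, uIcc_of_le (by norm_num)]
    exact Icc_subset_Icc (by norm_num) le_rfl
  · exact fun x _ => by simp [Real.sqrt_inv]

lemma intervalIntegrable_ellipticKIntegrand {k : ℝ} (hk : k ^ 2 < 1) :
    IntervalIntegrable (ellipticKIntegrand k) volume 0 1 := by
  refine intervalIntegrable_inv_sqrt_one_sub_sq.mul_continuousOn
    (ContinuousOn.inv₀ (by fun_prop) fun x hx => ?_)
  rw [uIcc_of_le zero_le_one] at hx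
  have : x ^ 2 ≤ 1 := by nlinarith [hx.1, hx.2]
  exact (Real.sqrt_pos.2 (by nlinarith)).ne'

lemma one_add_half_le_inv_sqrt_one_sub {u : ℝ} (hu0 : 0 ≤ u) (hu1 : u < 1) :
    1 + u / 2 ≤ (√(1 - u))⁻¹ := by
  have hpos : 0 < √(1 - u) := Real.sqrt_pos.2 (by linarith)
  rw [le_inv_comm₀ (by positivity) hpos, inv_eq_one_div, le_div_iff₀ (by positivity)]
  nlinarith [Real.sq_sqrt (show 0 ≤ 1 - u by linarith), sq_nonneg (1 - √(1 - u))]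

lemma hasDerivAt_arcsin_sub_mul_sqrt {x : ℝ} (hx : x ∈ Ioo (-1) 1) :
    HasDerivAt (fun y => arcsin y - y * √(1 - y ^ 2)) (2 * x ^ 2 * (√(1 - x ^ 2))⁻¹) x := by
  have hpos : 0 < 1 - x ^ 2 := by nlinarith [hx.1, hx.2]
  have hsq := ((hasDerivAt_pow 2 x).const_sub 1).sqrt hpos.ne'
  refine ((hasDerivAt_arcsin hx.1.ne' hx.2.ne).sub ((hasDerivAt_id' x).mul hsq)).congr_deriv ?_
  have : √(1 - x ^ 2) ≠ 0 := (Real.sqrt_pos.2 hpos).ne'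
  field_simp
  rw [Real.sq_sqrt hpos.le]
  push_cast
  ring

theorem pi_div_two_mul_le_ellipticK {k : ℝ} (hk : k ^ 2 < 1) :
    π / 2 * (1 + k ^ 2 / 4) ≤ ellipticK k := by
  let G y := arcsin y + k ^ 2 / 4 * (arcsin y - y * √(1 - y ^ 2))
  have hG : G 1 - G 0 = π / 2 * (1 + k ^ 2 / 4) := by
    simp only [G, arcsin_one, arcsin_zero, one_pow, sub_self, sqrt_zero, sqrt_one, mul_zero,
      mul_one, sub_zero, add_zero, zero_pow two_ne_zero]
    ring
  have hG' : ∀ x ∈ Ioo (0:ℝ) 1,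
      HasDerivAt G ((√(1 - x ^ 2))⁻¹ * (1 + k ^ 2 * x ^ 2 / 2)) x := fun x hx => by
    have hx' : x ∈ Ioo (-1) 1 := ⟨by linarith [hx.1], hx.2⟩
    refine ((hasDerivAt_arcsin hx'.1.ne' hx'.2.ne).add
      ((hasDerivAt_arcsin_sub_mul_sqrt hx').const_mul (k ^ 2 / 4))).congr_deriv ?_
    ring
  rw [← hG, ellipticK_eq_integral]
  refine sub_le_integral_of_hasDeriv_right_of_le zero_le_one
    (by fun_prop (disch := exact continuous_arcsin)) (fun x hx => (hG' x hx).hasDerivWithinAt)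
    ((intervalIntegrable_iff_integrableOn_Icc_of_le zero_le_one).1
      (intervalIntegrable_ellipticKIntegrand hk)) fun x hx => ?_
  have hx2 : x ^ 2 < 1 := by nlinarith [hx.1, hx.2]
  unfold ellipticKIntegrand
  gcongr
  exact one_add_half_le_inv_sqrt_one_sub (by positivity) (by nlinarith)

section Majorant

variable {s q x : ℝ}

noncomputable def majorantRoot (s q x : ℝ) : ℝ := √(s ^ 2 + q * ((1 + x) / (1 - x)))

noncomputable def majorantPrimitive (s q x : ℝ) : ℝ :=
  (2 * s)⁻¹ * (log (majorantRoot s q x - s) - log (majorantRoot s q x + s))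

lemma majorantRoot_sq (hq : 0 ≤ q) (hx : x ∈ Ioo (-1) 1) :
    majorantRoot s q x ^ 2 = s ^ 2 + q * ((1 + x) / (1 - x)) := by
  have : 0 ≤ (1 + x) / (1 - x) := div_nonneg (by linarith [hx.1]) (by linarith [hx.2])
  exact Real.sq_sqrt (by positivity)

lemma lt_majorantRoot (hs : 0 ≤ s) (hq : 0 < q) (hx : x ∈ Ioo (-1) 1) :
    s < majorantRoot s q x := by
  have : 0 < (1 + x) / (1 - x) := div_pos (by linarith [hx.1]) (by linarith [hx.2])
  rw [majorantRoot, Real.lt_sqrt hs]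
  nlinarith

lemma hasDerivAt_majorantRoot (hs : 0 ≤ s) (hq : 0 < q) (hx : x ∈ Ioo (-1) 1) :
    HasDerivAt (majorantRoot s q) (q / ((1 - x) ^ 2 * majorantRoot s q x)) x := by
  have h1x : 1 - x ≠ 0 := by linarith [hx.2]
  have hw := hs.trans_lt (lt_majorantRoot hs hq hx)
  have hv : HasDerivAt (fun y => (1 + y) / (1 - y)) (2 / (1 - x) ^ 2) x := by
    refine (((hasDerivAt_id' x).const_add 1).div ((hasDerivAt_id' x).const_sub 1) h1x).congr_deriv
      ?_
    ring
  have hu : HasDerivAt (fun y => s ^ 2 + q * ((1 + y) / (1 - y))) (q * (2 / (1 - x) ^ 2)) x :=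
    (hv.const_mul q).const_add _
  refine (hu.sqrt ?_).congr_deriv ?_
  · rw [← majorantRoot_sq hq.le hx]
    positivity
  · rw [← majorantRoot]
    field_simp

lemma hasDerivAt_log_sub_log_add {f : ℝ → ℝ} {f' : ℝ} (hf : HasDerivAt f f' x) (hs : 0 < s)
    (hfx : s < f x) :
    HasDerivAt (fun y => (2 * s)⁻¹ * (log (f y - s) - log (f y + s)))
      (f' / (f x ^ 2 - s ^ 2)) x := by
  refine (((hf.sub_const s).log (by linarith)).sub ((hf.add_const s).log (by linarith))).const_mul
    _ |>.congr_deriv ?_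
  have h1 : f x - s ≠ 0 := by linarith
  have h2 : f x + s ≠ 0 := by linarith
  have h3 : f x ^ 2 - s ^ 2 ≠ 0 := by nlinarith
  field_simp
  ring

lemma hasDerivAt_majorantPrimitive (hs : 0 < s) (hq : 0 < q) (hx : x ∈ Ioo (-1) 1) :
    HasDerivAt (majorantPrimitive s q) ((1 - x ^ 2) * majorantRoot s q x)⁻¹ x := by
  refine (hasDerivAt_log_sub_log_add (hasDerivAt_majorantRoot hs.le hq hx) hs
    (lt_majorantRoot hs.le hq hx)).congr_deriv ?_
  rw [majorantRoot_sq hq.le hx]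
  have h1 : 1 - x ≠ 0 := by linarith [hx.2]
  have h2 : 1 + x ≠ 0 := by linarith [hx.1]
  have h3 : 1 - x ^ 2 ≠ 0 := by nlinarith [hx.1, hx.2]
  have hw : majorantRoot s q x ≠ 0 := (hs.trans (lt_majorantRoot hs.le hq hx)).ne'
  field_simp
  ring

lemma majorantPrimitive_nonpos (hs : 0 < s) (hq : 0 < q) (hx : x ∈ Ioo (-1) 1) :
    majorantPrimitive s q x ≤ 0 := by
  have := lt_majorantRoot hs.le hq hx
  have := Real.log_le_log (by linarith)
    (by linarith : majorantRoot s q x - s ≤ majorantRoot s q x + s)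
  exact mul_nonpos_of_nonneg_of_nonpos (by positivity) (by linarith)

lemma neg_majorantPrimitive_zero (hs : 0 < s) (hq : 0 < q) :
    -majorantPrimitive s q 0 = s⁻¹ * log ((√(s ^ 2 + q) + s) / √q) := by
  have hm : majorantRoot s q 0 = √(s ^ 2 + q) := by simp [majorantRoot]
  have hsm : s < √(s ^ 2 + q) := hm ▸ lt_majorantRoot hs.le hq (by norm_num)
  have hlog_q : log q = log (√(s ^ 2 + q) - s) + log (√(s ^ 2 + q) + s) := by
    rw [← Real.log_mul (by linarith) (by positivity)]
    congr 1
    nlinarith [Real.sq_sqrt (show 0 ≤ s ^ 2 + q by positivity)]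
  rw [majorantPrimitive, hm, Real.log_div (by positivity) (by positivity), Real.log_sqrt hq.le,
    hlog_q]
  field_simp
  ring

end Majorant

lemma tendsto_primitive_nhdsLT {f : ℝ → ℝ} {a b : ℝ} (hab : a < b)
    (hf : IntervalIntegrable f volume a b) :
    Tendsto (fun x => ∫ t in a..x, f t) (𝓝[<] b) (𝓝 (∫ t in a..b, f t)) :=
  (continuousOn_primitive_interval' hf left_mem_uIcc b right_mem_uIcc).mono_of_mem_nhdsWithin
    (by rw [uIcc_of_le hab.le]; exact Icc_mem_nhdsLT hab) |>.tendsto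

lemma ellipticKIntegrand_le_majorant {k x : ℝ} (hk : k ^ 2 ≤ 1) (hx : x ∈ Ioo (-1) 1) :
    ellipticKIntegrand √(1 - k ^ 2) x ≤
      ((1 - x ^ 2) * majorantRoot √(1 - k ^ 2 / 2) (k ^ 2 / 4) x)⁻¹ := by
  have h1x : 0 < 1 - x := by linarith [hx.2]
  have hx1 : 0 < 1 + x := by linarith [hx.1]
  have hx2 : 0 < 1 - x ^ 2 := by nlinarith
  set w := majorantRoot √(1 - k ^ 2 / 2) (k ^ 2 / 4) x
  have hw : 0 < w := Real.sqrt_pos.2 <| by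
    have := div_pos hx1 h1x
    rw [Real.sq_sqrt (by linarith)]
    nlinarith
  have hw2 : w ^ 2 = (1 - k ^ 2 / 2) + k ^ 2 / 4 * ((1 + x) / (1 - x)) := by
    rw [majorantRoot_sq (by positivity) hx, Real.sq_sqrt (by linarith)]
  -- `1 - (1 - k²) x² - (1 - x²) w² = k² (1 - x)² / 4`
  have hkey : √(1 - x ^ 2) * w ≤ √(1 - √(1 - k ^ 2) ^ 2 * x ^ 2) := by
    rw [Real.sq_sqrt (by linarith), ← Real.sqrt_sq hw.le, ← Real.sqrt_mul hx2.le]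
    apply Real.sqrt_le_sqrt
    rw [hw2]
    field_simp
    nlinarith [mul_nonneg (sq_nonneg k) (pow_nonneg h1x.le 3)]
  calc ellipticKIntegrand √(1 - k ^ 2) x
      = (√(1 - x ^ 2) * √(1 - √(1 - k ^ 2) ^ 2 * x ^ 2))⁻¹ := (mul_inv _ _).symm
    _ ≤ (√(1 - x ^ 2) * (√(1 - x ^ 2) * w))⁻¹ := inv_anti₀ (by positivity) (by gcongr)
    _ = ((1 - x ^ 2) * w)⁻¹ := by rw [← mul_assoc, Real.mul_self_sqrt hx2.le]

theorem ellipticK_sqrt_one_sub_sq_le {k : ℝ} (hk0 : 0 < k) (hk1 : k < 1) :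
    ellipticK √(1 - k ^ 2) ≤
      (√(1 - k ^ 2 / 2))⁻¹ * log ((√(1 - k ^ 2 / 4) + √(1 - k ^ 2 / 2)) / (k / 2)) := by
  set s := √(1 - k ^ 2 / 2)
  have hs : 0 < s := Real.sqrt_pos.2 (by nlinarith)
  have hq : 0 < k ^ 2 / 4 := by positivity
  have hψ0 := neg_majorantPrimitive_zero hs hq
  have hsqrt : √(k ^ 2 / 4) = k / 2 := by
    rw [show k ^ 2 / 4 = (k / 2) ^ 2 by ring]
    exact Real.sqrt_sq (by positivity)
  rw [Real.sq_sqrt (by nlinarith), hsqrt, show 1 - k ^ 2 / 2 + k ^ 2 / 4 = 1 - k ^ 2 / 4 by ring]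
    at hψ0
  rw [← hψ0]
  have hint := intervalIntegrable_ellipticKIntegrand (k := √(1 - k ^ 2))
    (by rw [Real.sq_sqrt (by nlinarith)]; nlinarith)
  have hbound : ∀ b ∈ Ioo (0:ℝ) 1, ∫ x in (0:ℝ)..b, ellipticKIntegrand √(1 - k ^ 2) x ≤
      -majorantPrimitive s (k ^ 2 / 4) 0 := by
    intro b hb
    have hIcc : ∀ x ∈ Icc 0 b, x ∈ Ioo (-1) 1 := fun x hx =>
      ⟨by linarith [hx.1], hx.2.trans_lt hb.2⟩
    have hψ' := fun x hx => hasDerivAt_majorantPrimitive hs hq (hIcc x hx)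
    calc ∫ x in (0:ℝ)..b, ellipticKIntegrand √(1 - k ^ 2) x
        ≤ majorantPrimitive s (k ^ 2 / 4) b - majorantPrimitive s (k ^ 2 / 4) 0 :=
          integral_le_sub_of_hasDeriv_right_of_le hb.1.le
            (fun x hx => (hψ' x hx).continuousAt.continuousWithinAt)
            (fun x hx => (hψ' x (Ioo_subset_Icc_self hx)).hasDerivWithinAt)
            (((intervalIntegrable_iff_integrableOn_Icc_of_le zero_le_one).1 hint).mono_set
              (Icc_subset_Icc le_rfl hb.2.le))
            (fun x hx => ellipticKIntegrand_le_majorant (by nlinarith)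
              (hIcc x (Ioo_subset_Icc_self hx)))
      _ ≤ _ := by linarith [majorantPrimitive_nonpos hs hq (hIcc b ⟨hb.1.le, le_rfl⟩)]
  exact le_of_tendsto (tendsto_primitive_nhdsLT zero_lt_one hint)
    (eventually_of_mem (Ioo_mem_nhdsLT zero_lt_one) hbound)

lemma sqrt_one_sub_le {t : ℝ} (ht : t ≤ 2) : √(1 - t) ≤ 1 - t / 2 :=
  Real.sqrt_le_iff.2 ⟨by linarith, by nlinarith [sq_nonneg t]⟩

lemma log_half_add_sqrt_le {k : ℝ} (hk : k ^ 2 ≤ 1) :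
    log ((√(1 - k ^ 2 / 4) + √(1 - k ^ 2 / 2)) / 2) ≤ -(3 * k ^ 2 / 16) := by
  have hm : 0 < √(1 - k ^ 2 / 4) := Real.sqrt_pos.2 (by linarith)
  have h4 := sqrt_one_sub_le (t := k ^ 2 / 4) (by linarith)
  have h2 := sqrt_one_sub_le (t := k ^ 2 / 2) (by linarith)
  linarith [Real.log_le_sub_one_of_pos (by positivity :
    0 < (√(1 - k ^ 2 / 4) + √(1 - k ^ 2 / 2)) / 2)]

lemma one_sub_le_sqrt_mul {k : ℝ} (hk : k ^ 2 ≤ 1) :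
    1 - k ^ 4 / 8 ≤ √(1 - k ^ 2 / 2) * (1 + k ^ 2 / 4) := by
  rw [← Real.sqrt_sq (show 0 ≤ 1 + k ^ 2 / 4 by positivity), ← Real.sqrt_mul (by linarith),
    Real.le_sqrt' (by nlinarith)]
  nlinarith [pow_nonneg (sq_nonneg k) 2, mul_nonneg (pow_nonneg (sq_nonneg k) 2) (sub_nonneg.2 hk)]

lemma sq_mul_log_four_div_le {k : ℝ} (hk0 : 0 < k) (hk1 : k ≤ 1) :
    k ^ 2 * log (4 / k) ≤ 3 / 2 := by
  have hlog4 : log 4 = 2 * log 2 := by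
    rw [show (4:ℝ) = 2 ^ 2 by norm_num, Real.log_pow]
    norm_num
  have hk : -(k ^ 2 * log k) ≤ (1 - k ^ 2) / 2 := by
    have h := Real.log_le_sub_one_of_pos (show 0 < 1 / k ^ 2 by positivity)
    rw [one_div, Real.log_inv, Real.log_pow] at h
    have h' := mul_le_mul_of_nonneg_left h (sq_nonneg k)
    rw [mul_sub, mul_inv_cancel₀ (by positivity)] at h'
    push_cast at h'
    linarith
  rw [Real.log_div (by norm_num) hk0.ne']
  nlinarith [Real.log_two_lt_d9, Real.log_two_gt_d9, sq_nonneg k]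

lemma inv_sqrt_mul_log_le {k : ℝ} (hk0 : 0 < k) (hk1 : k < 1) :
    (√(1 - k ^ 2 / 2))⁻¹ * log ((√(1 - k ^ 2 / 4) + √(1 - k ^ 2 / 2)) / (k / 2)) ≤
      (1 + k ^ 2 / 4) * log (4 / k) := by
  have hk : k ^ 2 ≤ 1 := by nlinarith
  have hs : 0 < √(1 - k ^ 2 / 2) := Real.sqrt_pos.2 (by linarith)
  have hL : 0 ≤ log (4 / k) := Real.log_nonneg (by rw [le_div_iff₀ hk0]; linarith)
  have hsplit : log ((√(1 - k ^ 2 / 4) + √(1 - k ^ 2 / 2)) / (k / 2)) =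
      log (4 / k) + log ((√(1 - k ^ 2 / 4) + √(1 - k ^ 2 / 2)) / 2) := by
    rw [← Real.log_mul (by positivity) (by positivity)]
    congr 1
    field_simp
    ring
  rw [inv_mul_le_iff₀ hs, hsplit]
  calc log (4 / k) + log ((√(1 - k ^ 2 / 4) + √(1 - k ^ 2 / 2)) / 2)
      ≤ log (4 / k) - 3 * k ^ 2 / 16 := by linarith [log_half_add_sqrt_le hk]
    _ ≤ log (4 / k) - k ^ 2 / 8 * (k ^ 2 * log (4 / k)) := by
      nlinarith [sq_mul_log_four_div_le hk0 hk1.le]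
    _ = (1 - k ^ 4 / 8) * log (4 / k) := by ring
    _ ≤ √(1 - k ^ 2 / 2) * ((1 + k ^ 2 / 4) * log (4 / k)) := by
      rw [← mul_assoc]
      exact mul_le_mul_of_nonneg_right (one_sub_le_sqrt_mul hk) hL

theorem moduleT_le_two_div_pi_mul_log {k : ℝ} (hk0 : 0 < k) (hk1 : k < 1) :
    moduleT k ≤ 2 / π * log (4 / k) := by
  have hK := pi_div_two_mul_le_ellipticK (k := k) (by nlinarith)
  have hL : 0 ≤ log (4 / k) := Real.log_nonneg (by rw [le_div_iff₀ hk0]; linarith)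
  rw [moduleT, div_le_iff₀ (lt_of_lt_of_le (by positivity) hK)]
  calc ellipticK √(1 - k ^ 2) ≤ (1 + k ^ 2 / 4) * log (4 / k) :=
        (ellipticK_sqrt_one_sub_sq_le hk0 hk1).trans (inv_sqrt_mul_log_le hk0 hk1)
    _ = 2 / π * log (4 / k) * (π / 2 * (1 + k ^ 2 / 4)) := by field_simp
    _ ≤ 2 / π * log (4 / k) * ellipticK k := by gcongr

/-- For `0 < a < 1`,
`T(sin(πa/2)) ≤ (2/π) log(4/sin(πa/2)) ≤ (2/π) log(4/a)`. -/
theorem stmt6 (a : ℝ) (ha0 : 0 < a) (ha1 : a < 1) :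
    moduleT (Real.sin (π * a / 2)) ≤ (2 / π) * Real.log (4 / Real.sin (π * a / 2)) ∧
    (2 / π) * Real.log (4 / Real.sin (π * a / 2)) ≤ (2 / π) * Real.log (4 / a) := by
  have hθ0 : 0 < π * a / 2 := by positivity
  have hθ1 : π * a / 2 < π / 2 := by nlinarith [pi_pos]
  have hk0 : 0 < sin (π * a / 2) := sin_pos_of_pos_of_lt_pi hθ0 (by linarith)
  have hk1 : sin (π * a / 2) < 1 :=
    sin_pi_div_two ▸ sin_lt_sin_of_lt_of_le_pi_div_two (by linarith) le_rfl hθ1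
  have hak : a ≤ sin (π * a / 2) := by
    simpa [field] using mul_le_sin hθ0.le hθ1.le
  refine ⟨moduleT_le_two_div_pi_mul_log hk0 hk1, ?_⟩
  gcongr
end
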